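/- arXiv:1412.0219 — 6 statements merged into one kernel-verified Lean document; each statement's English description precedes it below -/
import Mathlib

section
/- Let T > 0. Let B : E → E be Lipschitz with constant L_B, let r : C([−h,0];E) → [0,h] (i.e. r takes values in [0,h]) be Lipschitz with constant L_r with respect to the supremum norm, and let u : [−h,T] → E satisfy ‖u(t) − u(s)‖ ≤ H_u |t − s|^{1/2} for all t, s ∈ [−h,T]. Define g : [0,T] → E by g(t) = B(u(t − r(u_t))). Then for all s, t ∈ [0,T], ‖g(t) − g(s)‖ ≤ L_B H_u (T^{1/2} + L_r H_u)^{1/2} |t − s|^{1/4}; in particular g is Hölder continuous with exponent 1/4 on [0,T]. -/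
/-- The segment `u_t ∈ C([-h,0];E)` of a function `u` that is continuous on `[-h,T]`,
obtained by clamping the argument to `[-h,T]` (for `t ∈ [0,T]` and `θ ∈ [-h,0]` one has
`t + θ ∈ [-h,T]`, so there the clamping is the identity and `(clampSeg … t) θ = u (t+θ)`). -/
noncomputable def clampSeg {E : Type*} [NormedAddCommGroup E] (h T : ℝ) (hhT : -h ≤ T)
    (u : ℝ → E) (huc : ContinuousOn u (Set.Icc (-h) T)) (t : ℝ) :
    C(Set.Icc (-h) (0 : ℝ), E) :=
  ⟨fun θ => Set.IccExtend hhT ((Set.Icc (-h) T).restrict u) (t + (θ : ℝ)), by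
    exact ((continuousOn_iff_continuous_restrict.mp huc).comp continuous_projIcc).comp
      (continuous_const.add continuous_subtype_val)⟩

/-- If `B : E → E` is Lipschitz with constant `L_B`,
`r : C([-h,0];E) → [0,h]` is Lipschitz with constant `L_r` w.r.t. the sup norm and
`u : [-h,T] → E` is `1/2`-Hölder with constant `H_u`, then `g(t) = B(u(t - r(u_t)))`
satisfies `‖g(t) - g(s)‖ ≤ L_B H_u (T^{1/2} + L_r H_u)^{1/2} |t-s|^{1/4}` on `[0,T]`. -/
theorem g_quarter_holder {E : Type*} [NormedAddCommGroup E] [NormedSpace ℝ E] [CompleteSpace E]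
    (h T LB Lr Hu : ℝ) (hh : 0 < h) (hT : 0 < T) (hLB : 0 ≤ LB) (hLr : 0 ≤ Lr) (hHu : 0 ≤ Hu)
    (B : E → E) (hB : ∀ x y : E, ‖B x - B y‖ ≤ LB * ‖x - y‖)
    (r : C(Set.Icc (-h) (0 : ℝ), E) → ℝ)
    (hr_mem : ∀ φ, r φ ∈ Set.Icc (0 : ℝ) h)
    (hr_lip : ∀ φ ψ, |r φ - r ψ| ≤ Lr * ‖φ - ψ‖)
    (u : ℝ → E) (huc : ContinuousOn u (Set.Icc (-h) T))
    (hu : ∀ t ∈ Set.Icc (-h) T, ∀ s ∈ Set.Icc (-h) T,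
      ‖u t - u s‖ ≤ Hu * |t - s| ^ ((1 : ℝ) / 2)) :
    ∀ s ∈ Set.Icc (0 : ℝ) T, ∀ t ∈ Set.Icc (0 : ℝ) T,
      ‖B (u (t - r (clampSeg h T (by linarith) u huc t)))
          - B (u (s - r (clampSeg h T (by linarith) u huc s)))‖
        ≤ LB * Hu * (T ^ ((1 : ℝ) / 2) + Lr * Hu) ^ ((1 : ℝ) / 2) * |t - s| ^ ((1 : ℝ) / 4) := by
  intro s hs t ht
  have hhT : (-h : ℝ) ≤ T := by linarith
  set rt := r (clampSeg h T hhT u huc t) with hrt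
  set rs := r (clampSeg h T hhT u huc s) with hrs
  have hrt_mem := hr_mem (clampSeg h T hhT u huc t)
  have hrs_mem := hr_mem (clampSeg h T hhT u huc s)
  have hat : t - rt ∈ Set.Icc (-h) T :=
    ⟨by cases ht; cases hrt_mem; linarith, by cases ht; cases hrt_mem; linarith⟩
  have has : s - rs ∈ Set.Icc (-h) T :=
    ⟨by cases hs; cases hrs_mem; linarith, by cases hs; cases hrs_mem; linarith⟩
  -- segment difference bound
  have hseg : ‖clampSeg h T hhT u huc t - clampSeg h T hhT u huc s‖
      ≤ Hu * |t - s| ^ ((1:ℝ)/2) := by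
    have hne : (Set.Icc (-h) (0:ℝ)).Nonempty := Set.nonempty_Icc.mpr (by linarith)
    have : Nonempty (Set.Icc (-h) (0:ℝ)) := hne.to_subtype
    refine (ContinuousMap.norm_le _ (by positivity)).mpr fun θ => ?_
    simp only [ContinuousMap.sub_apply, clampSeg, ContinuousMap.coe_mk, Set.IccExtend]
    have hproj : ∀ x y : ℝ,
        |((Set.projIcc (-h) T hhT x : ℝ)) - ((Set.projIcc (-h) T hhT y : ℝ))| ≤ |x - y| := by
      intro x y
      have := (LipschitzWith.projIcc hhT).dist_le_mul x y
      simpa [Real.dist_eq, Subtype.dist_eq] using this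
    have h1 := hu _ (Set.projIcc (-h) T hhT (t + θ)).2 _ (Set.projIcc (-h) T hhT (s + θ)).2
    refine h1.trans (mul_le_mul_of_nonneg_left ?_ hHu)
    refine Real.rpow_le_rpow (abs_nonneg _) ?_ (by norm_num)
    calc |((Set.projIcc (-h) T hhT (t+θ) : ℝ)) - ((Set.projIcc (-h) T hhT (s+θ) : ℝ))|
        ≤ |(t + (θ:ℝ)) - (s + (θ:ℝ))| := hproj _ _
      _ = |t - s| := by ring_nf
  -- |rt - rs| bound
  have hrdiff : |rt - rs| ≤ Lr * (Hu * |t - s| ^ ((1:ℝ)/2)) :=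
    (hr_lip _ _).trans (mul_le_mul_of_nonneg_left hseg hLr)
  -- key distance bound
  have habs : |t - rt - (s - rs)| ≤ (T ^ ((1:ℝ)/2) + Lr * Hu) * |t - s| ^ ((1:ℝ)/2) := by
    have h1 : |t - rt - (s - rs)| ≤ |t - s| + |rt - rs| := by
      calc |t - rt - (s - rs)| = |(t - s) - (rt - rs)| := by ring_nf
        _ ≤ |t - s| + |rt - rs| := abs_sub _ _
    have h2 : |t - s| ≤ T ^ ((1:ℝ)/2) * |t - s| ^ ((1:ℝ)/2) := by
      have hts : |t - s| ≤ T := by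
        rw [abs_sub_le_iff]; cases hs; cases ht; constructor <;> linarith
      calc |t - s| = |t - s| ^ ((1:ℝ)/2 + 1/2) := by norm_num
        _ = |t - s| ^ ((1:ℝ)/2) * |t - s| ^ ((1:ℝ)/2) :=
            Real.rpow_add' (abs_nonneg _) (by norm_num)
        _ ≤ T ^ ((1:ℝ)/2) * |t - s| ^ ((1:ℝ)/2) := by
            have := Real.rpow_le_rpow (abs_nonneg _) hts (by norm_num : (0:ℝ) ≤ 1/2)
            exact mul_le_mul_of_nonneg_right this (Real.rpow_nonneg (abs_nonneg _) _)
    calc |t - rt - (s - rs)| ≤ |t - s| + |rt - rs| := h1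
      _ ≤ T ^ ((1:ℝ)/2) * |t - s| ^ ((1:ℝ)/2) + Lr * (Hu * |t - s| ^ ((1:ℝ)/2)) :=
          add_le_add h2 hrdiff
      _ = (T ^ ((1:ℝ)/2) + Lr * Hu) * |t - s| ^ ((1:ℝ)/2) := by ring
  have hC : (0:ℝ) ≤ T ^ ((1:ℝ)/2) + Lr * Hu := by
    have := Real.rpow_nonneg hT.le ((1:ℝ)/2); positivity
  calc ‖B (u (t - rt)) - B (u (s - rs))‖ ≤ LB * ‖u (t - rt) - u (s - rs)‖ := hB _ _
    _ ≤ LB * (Hu * |t - rt - (s - rs)| ^ ((1:ℝ)/2)) :=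
        mul_le_mul_of_nonneg_left (hu _ hat _ has) hLB
    _ ≤ LB * (Hu * ((T ^ ((1:ℝ)/2) + Lr * Hu) * |t - s| ^ ((1:ℝ)/2)) ^ ((1:ℝ)/2)) :=
        mul_le_mul_of_nonneg_left (mul_le_mul_of_nonneg_left
          (Real.rpow_le_rpow (abs_nonneg _) habs (by norm_num)) hHu) hLB
    _ = LB * Hu * (T ^ ((1:ℝ)/2) + Lr * Hu) ^ ((1:ℝ)/2) * |t - s| ^ ((1:ℝ)/4) := by
        have key : (|t - s| ^ ((1:ℝ)/2)) ^ ((1:ℝ)/2) = |t - s| ^ ((1:ℝ)/4) := by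
          rw [← Real.rpow_mul (abs_nonneg _)]; norm_num
        rw [Real.mul_rpow hC (Real.rpow_nonneg (abs_nonneg _) _), key]; ring
end

section
/- Let G be a real normed vector space, let B : E → G be Lipschitz with constant L_B, and let r : C([−h,0];E) → [0,h] be Lipschitz with constant L_r with respect to the supremum norm. Define F : C([−h,0];E) → G by F(φ) = B(φ(−r(φ))). If φ ∈ C([−h,0];E) is Lipschitz with constant L_φ (i.e. ‖φ(θ₁) − φ(θ₂)‖ ≤ L_φ|θ₁ − θ₂| for all θ₁, θ₂ ∈ [−h,0]), then for every ψ ∈ C([−h,0];E) one has ‖F(φ) − F(ψ)‖ ≤ L_B (L_φ L_r + 1) ‖φ − ψ‖_C. -/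
/-- Let `B : E → G` be Lipschitz with constant `L_B` and
`r : C([-h,0];E) → [0,h]` Lipschitz with constant `L_r` w.r.t. the sup norm, and
`F(φ) = B(φ(-r(φ)))`.  If `φ` is Lipschitz with constant `L_φ`, then for every `ψ`,
`‖F(φ) - F(ψ)‖ ≤ L_B (L_φ L_r + 1) ‖φ - ψ‖_C`. -/
theorem F_lipschitz_estimate {E G : Type*} [NormedAddCommGroup E] [NormedSpace ℝ E]
    [CompleteSpace E] [NormedAddCommGroup G] [NormedSpace ℝ G]
    (h LB Lr Lφ : ℝ) (hh : 0 < h) (hLB : 0 ≤ LB) (hLr : 0 ≤ Lr) (hLφ : 0 ≤ Lφ)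
    (B : E → G) (hB : ∀ x y : E, ‖B x - B y‖ ≤ LB * ‖x - y‖)
    (r : C(Set.Icc (-h) (0 : ℝ), E) → ℝ)
    (hr_mem : ∀ φ, r φ ∈ Set.Icc (0 : ℝ) h)
    (hr_lip : ∀ φ ψ, |r φ - r ψ| ≤ Lr * ‖φ - ψ‖)
    (φ : C(Set.Icc (-h) (0 : ℝ), E))
    (hφ_lip : ∀ θ₁ θ₂ : Set.Icc (-h) (0 : ℝ), ‖φ θ₁ - φ θ₂‖ ≤ Lφ * |(θ₁ : ℝ) - (θ₂ : ℝ)|) :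
    ∀ ψ : C(Set.Icc (-h) (0 : ℝ), E),
      ‖B (φ ⟨-(r φ), Set.mem_Icc.mpr
            ⟨neg_le_neg (Set.mem_Icc.mp (hr_mem φ)).2,
             neg_nonpos.mpr (Set.mem_Icc.mp (hr_mem φ)).1⟩⟩)
        - B (ψ ⟨-(r ψ), Set.mem_Icc.mpr
            ⟨neg_le_neg (Set.mem_Icc.mp (hr_mem ψ)).2,
             neg_nonpos.mpr (Set.mem_Icc.mp (hr_mem ψ)).1⟩⟩)‖
        ≤ LB * (Lφ * Lr + 1) * ‖φ - ψ‖ := by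
  intro ψ
  set xφ : Set.Icc (-h) (0 : ℝ) := ⟨-(r φ), Set.mem_Icc.mpr
            ⟨neg_le_neg (Set.mem_Icc.mp (hr_mem φ)).2,
             neg_nonpos.mpr (Set.mem_Icc.mp (hr_mem φ)).1⟩⟩
  set xψ : Set.Icc (-h) (0 : ℝ) := ⟨-(r ψ), Set.mem_Icc.mpr
            ⟨neg_le_neg (Set.mem_Icc.mp (hr_mem ψ)).2,
             neg_nonpos.mpr (Set.mem_Icc.mp (hr_mem ψ)).1⟩⟩
  calc ‖B (φ xφ) - B (ψ xψ)‖ ≤ LB * ‖φ xφ - ψ xψ‖ := hB _ _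
    _ ≤ LB * (Lφ * Lr * ‖φ - ψ‖ + ‖φ - ψ‖) := by
        apply mul_le_mul_of_nonneg_left _ hLB
        calc ‖φ xφ - ψ xψ‖ ≤ ‖φ xφ - φ xψ‖ + ‖φ xψ - ψ xψ‖ := norm_sub_le_norm_sub_add_norm_sub _ _ _
          _ ≤ Lφ * (Lr * ‖φ - ψ‖) + ‖φ - ψ‖ := by
              gcongr
              · calc ‖φ xφ - φ xψ‖ ≤ Lφ * |(xφ : ℝ) - (xψ : ℝ)| := hφ_lip _ _
                  _ ≤ Lφ * (Lr * ‖φ - ψ‖) := by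
                      apply mul_le_mul_of_nonneg_left _ hLφ
                      have : |(xφ : ℝ) - (xψ : ℝ)| = |r φ - r ψ| := by
                        simp [xφ, xψ, abs_sub_comm, neg_add_eq_sub]
                      rw [this]; exact hr_lip φ ψ
              · have := ContinuousMap.norm_coe_le_norm (φ - ψ) xψ
                simpa using this
          _ = Lφ * Lr * ‖φ - ψ‖ + ‖φ - ψ‖ := by ring
    _ = LB * (Lφ * Lr + 1) * ‖φ - ψ‖ := by ring
end

section
/- Let M > 0 and let φ, ψ ∈ C([−h,0];H) satisfy ‖φ‖_C ≤ M and ‖ψ‖_C ≤ M. Suppose ρ_φ, ρ_ψ ∈ [0,h] satisfy R(ρ_φ;φ) = 1 and R(ρ_ψ;ψ) = 1. Then |ρ_φ − ρ_ψ| ≤ (2 C₁ h M / (C₃ C₂²)) ‖φ − ψ‖_C; that is, the state-dependent delay defined by the threshold condition is Lipschitz continuous on bounded subsets of C([−h,0];H). -/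
/-- The threshold functional `R(ρ;φ) = ∫_{-ρ}^{0} ( C₁/(C₂ + ‖φ(s)‖²) + C₃ ) ds` for
`φ ∈ C([-h,0];H)` and `ρ ∈ [0,h]` (the evaluation of `φ` is extended by clamping the
argument to `[-h,0]`; for `ρ ∈ [0,h]` the integration variable stays in `[-h,0]`). -/
noncomputable def Rthr {H : Type*} [NormedAddCommGroup H] (h C₁ C₂ C₃ : ℝ)
    (hh0 : -h ≤ (0 : ℝ)) (φ : C(Set.Icc (-h) (0 : ℝ), H)) (ρ : ℝ) : ℝ :=
  ∫ s in (-ρ)..(0 : ℝ), (C₁ / (C₂ + ‖Set.IccExtend hh0 (⇑φ) s‖ ^ 2) + C₃)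

/-! If the integrand stays above `C₃ > 0`, the threshold `ρ` with `∫_{-ρ}^0 f = 1` moves by at
most `sup |f - g| · h / C₃` when `f` is replaced by `g`: the two thresholds enclose an interval on
which `f` integrates to the integral of `g - f` over the shorter one. For the threshold integrand,
`t ↦ C₁ / (C₂ + t²)` is `2 C₁ M / C₂²`-Lipschitz on `[-M, M]`, which turns `sup |f - g|` into
`2 C₁ M / C₂² · ‖φ - ψ‖`. -/

lemma abs_div_add_sq_sub_div_add_sq_le {C₁ C₂ M a b : ℝ} (hC₁ : 0 ≤ C₁) (hC₂ : 0 < C₂)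
    (ha : |a| ≤ M) (hb : |b| ≤ M) :
    |C₁ / (C₂ + a ^ 2) - C₁ / (C₂ + b ^ 2)| ≤ 2 * C₁ * M / C₂ ^ 2 * |a - b| := by
  have hM : 0 ≤ M := (abs_nonneg a).trans ha
  have hda : 0 < C₂ + a ^ 2 := by positivity
  have hdb : 0 < C₂ + b ^ 2 := by positivity
  have hsq : |b ^ 2 - a ^ 2| ≤ 2 * M * |a - b| := by
    rw [show b ^ 2 - a ^ 2 = (b + a) * (b - a) by ring, abs_mul, abs_sub_comm b a]
    gcongr
    linarith [abs_add_le b a]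
  have hden : C₂ ^ 2 ≤ (C₂ + a ^ 2) * (C₂ + b ^ 2) := by nlinarith [sq_nonneg a, sq_nonneg b]
  calc |C₁ / (C₂ + a ^ 2) - C₁ / (C₂ + b ^ 2)|
      = C₁ * |b ^ 2 - a ^ 2| / ((C₂ + a ^ 2) * (C₂ + b ^ 2)) := by
        rw [div_sub_div _ _ hda.ne' hdb.ne', abs_div, abs_of_pos (mul_pos hda hdb),
          show C₁ * (C₂ + b ^ 2) - (C₂ + a ^ 2) * C₁ = C₁ * (b ^ 2 - a ^ 2) by ring,
          abs_mul, abs_of_nonneg hC₁]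
    _ ≤ C₁ * (2 * M * |a - b|) / C₂ ^ 2 := by gcongr
    _ = 2 * C₁ * M / C₂ ^ 2 * |a - b| := by ring

lemma mul_sub_le_of_integral_eq {f g : ℝ → ℝ} {a b c ε : ℝ} (hf : Continuous f)
    (hg : Continuous g) (hcf : ∀ x, c ≤ f x) (hfg : ∀ x, |g x - f x| ≤ ε) (hb : 0 ≤ b)
    (hba : b ≤ a) (heq : ∫ x in (-a)..0, f x = ∫ x in (-b)..0, g x) :
    c * (a - b) ≤ ε * b := by
  have hgap : ∫ x in (-a)..(-b), f x = ∫ x in (-b)..0, (g x - f x) := by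
    rw [intervalIntegral.integral_sub (hg.intervalIntegrable _ _) (hf.intervalIntegrable _ _),
      ← heq, ← intervalIntegral.integral_add_adjacent_intervals
        (hf.intervalIntegrable (-a) (-b)) (hf.intervalIntegrable (-b) 0), add_sub_cancel_right]
  have hlow : c * (a - b) ≤ ∫ x in (-a)..(-b), f x := by
    have : ∫ _ in (-a)..(-b), c ≤ ∫ x in (-a)..(-b), f x :=
      intervalIntegral.integral_mono_on (by linarith) intervalIntegrable_const
        (hf.intervalIntegrable _ _) fun x _ => hcf x
    rwa [intervalIntegral.integral_const, smul_eq_mul, neg_sub_neg, mul_comm] at this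
  have hup : ∫ x in (-b)..0, (g x - f x) ≤ ε * b := by
    have := intervalIntegral.norm_integral_le_of_norm_le_const (a := -b) (b := 0)
      fun x _ => (Real.norm_eq_abs _).trans_le (hfg x)
    rw [zero_sub, neg_neg, abs_of_nonneg hb] at this
    exact (le_abs_self _).trans this
  linarith

lemma abs_sub_le_of_integral_eq {f g : ℝ → ℝ} {a b c ε h : ℝ} (hf : Continuous f)
    (hg : Continuous g) (hc : 0 < c) (hcf : ∀ x, c ≤ f x) (hcg : ∀ x, c ≤ g x)
    (hfg : ∀ x, |f x - g x| ≤ ε) (ha : a ∈ Set.Icc 0 h) (hb : b ∈ Set.Icc 0 h)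
    (heq : ∫ x in (-a)..0, f x = ∫ x in (-b)..0, g x) :
    |a - b| ≤ ε * h / c := by
  wlog hba : b ≤ a generalizing f g a b
  · rw [abs_sub_comm]
    exact this hg hf hcg hcf (fun x => abs_sub_comm (f x) (g x) ▸ hfg x) hb ha heq.symm
      (le_of_not_ge hba)
  have hε : 0 ≤ ε := (abs_nonneg _).trans (hfg 0)
  have hshift := mul_sub_le_of_integral_eq hf hg hcf (fun x => abs_sub_comm (g x) (f x) ▸ hfg x)
    hb.1 hba heq
  rw [abs_of_nonneg (sub_nonneg.2 hba), le_div_iff₀ hc]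
  nlinarith [mul_le_mul_of_nonneg_left hb.2 hε]

section ThresholdIntegrand

variable {H : Type*} [NormedAddCommGroup H] {h C₁ C₂ C₃ : ℝ} (hh0 : -h ≤ 0)

lemma continuous_threshold_integrand (hC₂ : 0 < C₂) (φ : C(Set.Icc (-h) (0 : ℝ), H)) :
    Continuous fun s => C₁ / (C₂ + ‖Set.IccExtend hh0 (⇑φ) s‖ ^ 2) + C₃ :=
  (continuous_const.div (continuous_const.add (φ.continuous.Icc_extend'.norm.pow 2))
    fun _ => (add_pos_of_pos_of_nonneg hC₂ (sq_nonneg _)).ne').add continuous_const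

lemma le_threshold_integrand (hC₁ : 0 ≤ C₁) (hC₂ : 0 < C₂) (φ : C(Set.Icc (-h) (0 : ℝ), H))
    (s : ℝ) : C₃ ≤ C₁ / (C₂ + ‖Set.IccExtend hh0 (⇑φ) s‖ ^ 2) + C₃ :=
  le_add_of_nonneg_left (by positivity)

lemma abs_threshold_integrand_sub_le (hC₁ : 0 ≤ C₁) (hC₂ : 0 < C₂) {M : ℝ}
    {φ ψ : C(Set.Icc (-h) (0 : ℝ), H)} (hφ : ‖φ‖ ≤ M) (hψ : ‖ψ‖ ≤ M) (s : ℝ) :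
    |(C₁ / (C₂ + ‖Set.IccExtend hh0 (⇑φ) s‖ ^ 2) + C₃)
        - (C₁ / (C₂ + ‖Set.IccExtend hh0 (⇑ψ) s‖ ^ 2) + C₃)|
      ≤ 2 * C₁ * M / C₂ ^ 2 * ‖φ - ψ‖ := by
  set p := Set.projIcc (-h) 0 hh0 s
  have hnorm {u : C(Set.Icc (-h) (0 : ℝ), H)} (hu : ‖u‖ ≤ M) : |‖u p‖| ≤ M := by
    rw [abs_norm]; exact (u.norm_coe_le_norm p).trans hu
  rw [add_sub_add_right_eq_sub]
  have hM : 0 ≤ M := (norm_nonneg φ).trans hφ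
  refine (abs_div_add_sq_sub_div_add_sq_le hC₁ hC₂ (hnorm hφ) (hnorm hψ)).trans ?_
  exact mul_le_mul_of_nonneg_left
    ((abs_norm_sub_norm_le _ _).trans ((φ - ψ).norm_coe_le_norm p)) (by positivity)

end ThresholdIntegrand

/-- If `‖φ‖_C ≤ M`, `‖ψ‖_C ≤ M` and `ρ_φ, ρ_ψ ∈ [0,h]` satisfy
`R(ρ_φ;φ) = 1 = R(ρ_ψ;ψ)`, then
`|ρ_φ - ρ_ψ| ≤ (2 C₁ h M / (C₃ C₂²)) ‖φ - ψ‖_C`:  the threshold state-dependent delay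
is Lipschitz on bounded subsets of `C([-h,0];H)`. -/
theorem threshold_delay_lipschitz {H : Type*} [NormedAddCommGroup H]
    (h C₁ C₂ C₃ M : ℝ) (hh : 0 < h) (hC₁ : 0 < C₁) (hC₂ : 0 < C₂) (hC₃ : 0 < C₃)
    (φ ψ : C(Set.Icc (-h) (0 : ℝ), H)) (hφ : ‖φ‖ ≤ M) (hψ : ‖ψ‖ ≤ M)
    (ρφ ρψ : ℝ) (hρφ : ρφ ∈ Set.Icc (0 : ℝ) h) (hρψ : ρψ ∈ Set.Icc (0 : ℝ) h)
    (hRφ : Rthr h C₁ C₂ C₃ (by linarith) φ ρφ = 1)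
    (hRψ : Rthr h C₁ C₂ C₃ (by linarith) ψ ρψ = 1) :
    |ρφ - ρψ| ≤ (2 * C₁ * h * M / (C₃ * C₂ ^ 2)) * ‖φ - ψ‖ := by
  have hh0 : -h ≤ (0 : ℝ) := by linarith
  have hdelay := abs_sub_le_of_integral_eq (continuous_threshold_integrand hh0 hC₂ φ)
    (continuous_threshold_integrand hh0 hC₂ ψ) hC₃ (le_threshold_integrand hh0 hC₁.le hC₂ φ)
    (le_threshold_integrand hh0 hC₁.le hC₂ ψ)
    (abs_threshold_integrand_sub_le hh0 hC₁.le hC₂ hφ hψ) hρφ hρψ (hRφ.trans hRψ.symm)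
  calc |ρφ - ρψ| ≤ 2 * C₁ * M / C₂ ^ 2 * ‖φ - ψ‖ * h / C₃ := hdelay
    _ = (2 * C₁ * h * M / (C₃ * C₂ ^ 2)) * ‖φ - ψ‖ := by field_simp
end

section
/- Assume C₃ h > 1, and let r : C([−h,0];H) → [0,h] be the map assigning to each φ the unique ρ ∈ [0,h] with R(ρ;φ) = 1. Then r is Fréchet differentiable at every φ ∈ C([−h,0];H), and its derivative is the continuous linear functional Dr(φ) given by Dr(φ)ψ = ( C₁/(C₂ + ‖φ(−r(φ))‖²) + C₃ )^{−1} · ∫_{−r(φ)}^{0} ( 2 C₁ ⟨φ(s), ψ(s)⟩ / (C₂ + ‖φ(s)‖²)² ) ds for ψ ∈ C([−h,0];H). -/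
/-!
The threshold `r φ` is defined implicitly by `R(r φ; φ) = 1`. The map `(φ, ρ) ↦ R(ρ; φ)` is
Fréchet differentiable at `(φ, r φ)`: in `ρ` the derivative is the integrand at `-ρ`, and in `φ`
the remainder of `x ↦ C₁ / (C₂ + ‖x‖²)` is quadratic in the increment, uniformly on bounded sets.
Since the integrand is at least `C₃ > 0`, a change of `φ` moves the threshold by at most
`C₃⁻¹ |R(r φ; φ + ψ) - R(r φ; φ)| = O(‖ψ‖)`. With this Lipschitz bound on `r`, linearising
`R(r(φ + ψ); φ + ψ) = R(r φ; φ)` gives `Dr = -(∂_ρ R)⁻¹ ∂_φ R`, without needing continuity of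
the partial derivatives as in the implicit function theorem.
-/

open Set Filter Topology Asymptotics MeasureTheory intervalIntegral Function
open scoped RealInnerProductSpace

section ImplicitDerivative

variable {E : Type*} [NormedAddCommGroup E] [NormedSpace ℝ E]

theorem hasFDerivAt_implicit_of_uniformly_expanding {Φ : E → ℝ → ℝ} {D : E × ℝ →L[ℝ] ℝ}
    {r : E → ℝ} {x₀ : E} {m : ℝ} (hm : 0 < m) (hΦ : HasFDerivAt (uncurry Φ) D (x₀, r x₀))
    (hD : D (0, 1) ≠ 0) (hlevel : ∀ x, Φ x (r x) = Φ x₀ (r x₀))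
    (hexpand : ∀ x ρ ρ', m * |ρ - ρ'| ≤ |Φ x ρ - Φ x ρ'|) :
    HasFDerivAt r (-(D (0, 1))⁻¹ • D.comp (ContinuousLinearMap.inl ℝ E ℝ)) x₀ := by
  set ρ₀ := r x₀
  have hslice : HasFDerivAt (fun x => Φ x ρ₀) (D.comp (ContinuousLinearMap.inl ℝ E ℝ)) x₀ :=
    HasFDerivAt.comp (g := uncurry Φ) x₀ hΦ (hasFDerivAt_prodMk_left (𝕜 := ℝ) x₀ ρ₀)
  have hr : (fun x => r x - ρ₀) =O[𝓝 x₀] fun x => x - x₀ := by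
    refine (isBigO_of_le' (c := m⁻¹) _ fun x => ?_).trans hslice.isBigO_sub
    rw [Real.norm_eq_abs, Real.norm_eq_abs, ← hlevel x, le_inv_mul_iff₀ hm,
      abs_sub_comm (Φ x ρ₀)]
    exact hexpand x (r x) ρ₀
  set u : E → E × ℝ := fun x => (x, r x)
  have hu : (fun x => u x - u x₀) =O[𝓝 x₀] fun x => x - x₀ :=
    (isBigO_refl _ _).prod_left hr
  have hu_tendsto : Tendsto u (𝓝 x₀) (𝓝 (u x₀)) :=
    tendsto_sub_nhds_zero_iff.1 (hu.trans_tendsto (tendsto_sub_nhds_zero_iff.2 tendsto_id))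
  have hDu : (fun x => D (u x - u x₀)) =o[𝓝 x₀] fun x => x - x₀ := by
    refine ((hΦ.isLittleO.comp_tendsto hu_tendsto).trans_isBigO hu).neg_left.congr_left
      fun x => ?_
    simp only [comp_apply, u, uncurry_apply_pair, hlevel x, sub_self, zero_sub, neg_neg]
    rfl
  refine HasFDerivAt.of_isLittleO ((hDu.const_mul_left (D (0, 1))⁻¹).congr_left fun x => ?_)
  have hsplit : u x - u x₀ = (x - x₀, 0) + (r x - ρ₀) • ((0 : E), (1 : ℝ)) := by
    simp [u, ρ₀]
  rw [hsplit, map_add, map_smul]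
  simp only [FunLike.coe_smul, Pi.smul_apply, ContinuousLinearMap.comp_apply,
    ContinuousLinearMap.inl_apply, smul_eq_mul]
  field_simp
  ring

end ImplicitDerivative

section MovingEndpoint

variable {E : Type*} [NormedAddCommGroup E] [NormedSpace ℝ E]

theorem hasFDerivAt_integral_neg_snd_neg {G : E → ℝ → ℝ} (hG : Continuous (uncurry G))
    (x₀ : E) (ρ₀ : ℝ) :
    HasFDerivAt (fun p : E × ℝ => ∫ s in -p.2..-ρ₀, G p.1 s)
      (G x₀ (-ρ₀) • ContinuousLinearMap.snd ℝ E ℝ) (x₀, ρ₀) := by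
  refine HasFDerivAt.of_isLittleO (isLittleO_iff.2 fun ε hε => ?_)
  obtain ⟨δ, hδ, hGδ⟩ := Metric.continuousAt_iff.1 (hG.continuousAt (x := (x₀, -ρ₀))) ε hε
  filter_upwards [Metric.ball_mem_nhds (x₀, ρ₀) hδ] with ⟨x, ρ⟩ hp
  rw [Metric.mem_ball] at hp
  have hclose : ∀ s ∈ uIoc (-ρ) (-ρ₀), ‖G x s - G x₀ (-ρ₀)‖ ≤ ε := by
    intro s hs
    rw [← dist_eq_norm]
    refine (hGδ (x := (x, s)) ?_).le
    have hs' : |s - -ρ₀| ≤ |ρ - ρ₀| := by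
      simpa [abs_sub_comm, add_comm, ← sub_eq_add_neg] using
        abs_sub_right_of_mem_uIcc (uIoc_subset_uIcc hs)
    rw [Prod.dist_eq, max_lt_iff] at hp ⊢
    exact ⟨hp.1, hs'.trans_lt (by simpa [Real.dist_eq] using hp.2)⟩
  have hint : ∀ a b, IntervalIntegrable (G x) volume a b :=
    fun a b => (hG.uncurry_left x).intervalIntegrable a b
  calc ‖(∫ s in -ρ..-ρ₀, G x s) - (∫ s in -ρ₀..-ρ₀, G x₀ s)
          - (G x₀ (-ρ₀) • ContinuousLinearMap.snd ℝ E ℝ) ((x, ρ) - (x₀, ρ₀))‖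
        = ‖∫ s in -ρ..-ρ₀, (G x s - G x₀ (-ρ₀))‖ := by
          rw [integral_sub (hint _ _) intervalIntegrable_const]
          simp only [integral_same, sub_zero, Prod.mk_sub_mk, smul_apply,
            ContinuousLinearMap.coe_snd', smul_eq_mul, intervalIntegral.integral_const]
          ring_nf
    _ ≤ ε * |ρ - ρ₀| := by
          simpa [abs_sub_comm, add_comm, ← sub_eq_add_neg] using
            norm_integral_le_of_norm_le_const hclose
    _ ≤ ε * ‖(x, ρ) - (x₀, ρ₀)‖ := by
          gcongr
          exact (le_max_right _ _).trans_eq' (by simp)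

theorem hasFDerivAt_integral_neg_snd {G : E → ℝ → ℝ} (hG : Continuous (uncurry G))
    {L : E →L[ℝ] ℝ} {x₀ : E} {ρ₀ b : ℝ} (hL : HasFDerivAt (fun x => ∫ s in -ρ₀..b, G x s) L x₀) :
    HasFDerivAt (fun p : E × ℝ => ∫ s in -p.2..b, G p.1 s)
      (G x₀ (-ρ₀) • ContinuousLinearMap.snd ℝ E ℝ + L.comp (ContinuousLinearMap.fst ℝ E ℝ))
      (x₀, ρ₀) := by
  refine ((hasFDerivAt_integral_neg_snd_neg hG x₀ ρ₀).add
    (hL.comp (x₀, ρ₀) (hasFDerivAt_fst (𝕜 := ℝ)))).congr_of_eventuallyEq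
    (Eventually.of_forall fun p => ?_)
  have hint : ∀ a b, IntervalIntegrable (G p.1) volume a b :=
    fun a b => (hG.uncurry_left p.1).intervalIntegrable a b
  exact (integral_add_adjacent_intervals (hint _ _) (hint _ _)).symm

end MovingEndpoint

theorem mul_abs_sub_le_abs_intervalIntegral {f : ℝ → ℝ} {m : ℝ} (hf : Continuous f)
    (hfm : ∀ s, m ≤ f s) (a b : ℝ) : m * |b - a| ≤ |∫ s in a..b, f s| := by
  wlog hab : a ≤ b generalizing a b
  · rw [abs_sub_comm, integral_symm, abs_neg]
    exact this b a (le_of_not_ge hab)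
  calc m * |b - a| = ∫ _ in a..b, m := by
        rw [abs_of_nonneg (sub_nonneg.2 hab), intervalIntegral.integral_const, smul_eq_mul,
          mul_comm]
    _ ≤ ∫ s in a..b, f s :=
        integral_mono_on hab intervalIntegrable_const (hf.intervalIntegrable _ _) fun s _ => hfm s
    _ ≤ |∫ s in a..b, f s| := le_abs_self _

section PointwiseRemainder

variable {H : Type*} [NormedAddCommGroup H] [InnerProductSpace ℝ H]

theorem abs_div_add_norm_sq_sub_add_inner_le {C₁ C₂ : ℝ} (hC₁ : 0 ≤ C₁) (hC₂ : 0 < C₂)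
    (x v : H) :
    |C₁ / (C₂ + ‖x + v‖ ^ 2) - C₁ / (C₂ + ‖x‖ ^ 2) + 2 * C₁ * ⟪x, v⟫ / (C₂ + ‖x‖ ^ 2) ^ 2|
      ≤ C₁ * ((2 * ‖x‖ + ‖v‖) ^ 2 / C₂ ^ 3 + 1 / C₂ ^ 2) * ‖v‖ ^ 2 := by
  set a := C₂ + ‖x‖ ^ 2
  set b := C₂ + ‖x + v‖ ^ 2
  have ha : C₂ ≤ a := le_add_of_nonneg_right (sq_nonneg _)
  have hb : C₂ ≤ b := le_add_of_nonneg_right (sq_nonneg _)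
  have ha0 : a ≠ 0 := (hC₂.trans_le ha).ne'
  have hb0 : b ≠ 0 := (hC₂.trans_le hb).ne'
  have hinner : 2 * ⟪x, v⟫ = (b - a) - ‖v‖ ^ 2 := by
    simp only [a, b, norm_add_sq_real]; ring
  -- `1/b - 1/a + (b - a)/a² = (b - a)²/(a² b)`: the remainder is quadratic in `b - a`
  have hid : C₁ / b - C₁ / a + 2 * C₁ * ⟪x, v⟫ / a ^ 2
      = C₁ * ((b - a) ^ 2 / (a ^ 2 * b) - ‖v‖ ^ 2 / a ^ 2) := by
    rw [show 2 * C₁ * ⟪x, v⟫ = C₁ * (2 * ⟪x, v⟫) by ring, hinner]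
    field_simp
    ring
  have hdiff : |b - a| ≤ (2 * ‖x‖ + ‖v‖) * ‖v‖ := by
    have hxv := abs_real_inner_le_norm x v
    rw [show b - a = 2 * ⟪x, v⟫ + ‖v‖ ^ 2 by linarith]
    calc |2 * ⟪x, v⟫ + ‖v‖ ^ 2| ≤ |2 * ⟪x, v⟫| + |‖v‖ ^ 2| := abs_add_le _ _
      _ = 2 * |⟪x, v⟫| + ‖v‖ ^ 2 := by rw [abs_mul, abs_two, abs_of_nonneg (sq_nonneg ‖v‖)]
      _ ≤ (2 * ‖x‖ + ‖v‖) * ‖v‖ := by nlinarith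
  have hP : (b - a) ^ 2 / (a ^ 2 * b) ≤ (2 * ‖x‖ + ‖v‖) ^ 2 * ‖v‖ ^ 2 / C₂ ^ 3 := by
    rw [← mul_pow, ← sq_abs]
    gcongr
    calc C₂ ^ 3 = C₂ ^ 2 * C₂ := by ring
      _ ≤ a ^ 2 * b := by gcongr
  have hQ : ‖v‖ ^ 2 / a ^ 2 ≤ ‖v‖ ^ 2 / C₂ ^ 2 := by gcongr
  rw [hid, abs_mul, abs_of_nonneg hC₁]
  calc C₁ * |(b - a) ^ 2 / (a ^ 2 * b) - ‖v‖ ^ 2 / a ^ 2|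
      ≤ C₁ * ((b - a) ^ 2 / (a ^ 2 * b) + ‖v‖ ^ 2 / a ^ 2) := by
        gcongr
        exact (abs_sub _ _).trans_eq (by rw [abs_of_nonneg (by positivity),
          abs_of_nonneg (by positivity)])
    _ ≤ C₁ * ((2 * ‖x‖ + ‖v‖) ^ 2 * ‖v‖ ^ 2 / C₂ ^ 3 + ‖v‖ ^ 2 / C₂ ^ 2) := by gcongr
    _ = C₁ * ((2 * ‖x‖ + ‖v‖) ^ 2 / C₂ ^ 3 + 1 / C₂ ^ 2) * ‖v‖ ^ 2 := by ring

end PointwiseRemainder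

section IntervalFunctions

variable {H : Type*} [NormedAddCommGroup H] {a b : ℝ} (hab : a ≤ b)

theorem continuous_uncurry_IccExtend :
    Continuous (uncurry fun (χ : C(Icc a b, H)) (s : ℝ) => IccExtend hab χ s) := by
  fun_prop

theorem continuous_uncurry_div_add_norm_sq_IccExtend {C₂ : ℝ} (hC₂ : 0 < C₂) (C₁ C₃ : ℝ) :
    Continuous (uncurry fun (χ : C(Icc a b, H)) (s : ℝ) =>
      C₁ / (C₂ + ‖IccExtend hab χ s‖ ^ 2) + C₃) :=
  (continuous_const.div (continuous_const.add ((continuous_uncurry_IccExtend hab).norm.pow 2))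
    fun _ => (add_pos_of_pos_of_nonneg hC₂ (sq_nonneg _)).ne').add continuous_const

variable [InnerProductSpace ℝ H]

noncomputable def innerIntegralCLM {w : ℝ → H} (hw : Continuous w) (c d : ℝ) :
    C(Icc a b, H) →L[ℝ] ℝ :=
  LinearMap.mkContinuousOfExistsBound
    { toFun := fun ψ => ∫ s in c..d, ⟪w s, IccExtend hab ψ s⟫
      map_add' := fun ψ ψ' => by
        rw [← intervalIntegral.integral_add]
        · simp only [IccExtend_apply, ContinuousMap.add_apply, inner_add_right]
        all_goals exact (hw.inner (ContinuousMap.continuous _).Icc_extend').intervalIntegrable _ _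
      map_smul' := fun t ψ => by
        simp only [IccExtend_apply, ContinuousMap.smul_apply, inner_smul_right,
          intervalIntegral.integral_const_mul, RingHom.id_apply, smul_eq_mul] }
    (by
      obtain ⟨M, hM⟩ := isCompact_uIcc.exists_bound_of_continuousOn hw.continuousOn
      refine ⟨M * |d - c|, fun ψ => ?_⟩
      calc ‖∫ s in c..d, ⟪w s, IccExtend hab ψ s⟫‖ ≤ M * ‖ψ‖ * |d - c| := by
            refine norm_integral_le_of_norm_le_const fun s hs => ?_
            calc ‖⟪w s, IccExtend hab ψ s⟫‖ ≤ ‖w s‖ * ‖IccExtend hab ψ s‖ := norm_inner_le_norm _ _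
              _ ≤ M * ‖ψ‖ := by
                gcongr
                · exact (norm_nonneg _).trans (hM s (uIoc_subset_uIcc hs))
                · exact hM s (uIoc_subset_uIcc hs)
                · exact ψ.norm_coe_le_norm _
        _ = M * |d - c| * ‖ψ‖ := by ring)

theorem innerIntegralCLM_apply {w : ℝ → H} (hw : Continuous w) (c d : ℝ) (ψ : C(Icc a b, H)) :
    innerIntegralCLM hab hw c d ψ = ∫ s in c..d, ⟪w s, IccExtend hab ψ s⟫ := rfl

theorem abs_div_add_norm_sq_IccExtend_sub_add_inner_le {C₁ C₂ : ℝ} (hC₁ : 0 ≤ C₁)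
    (hC₂ : 0 < C₂) {φ ψ : C(Icc a b, H)} (hψ : ‖ψ‖ ≤ 1) (s : ℝ) :
    |C₁ / (C₂ + ‖IccExtend hab (φ + ψ) s‖ ^ 2) - C₁ / (C₂ + ‖IccExtend hab φ s‖ ^ 2)
        + 2 * C₁ * ⟪IccExtend hab φ s, IccExtend hab ψ s⟫ / (C₂ + ‖IccExtend hab φ s‖ ^ 2) ^ 2|
      ≤ C₁ * ((2 * ‖φ‖ + 1) ^ 2 / C₂ ^ 3 + 1 / C₂ ^ 2) * ‖ψ‖ ^ 2 := by
  have hφs : ‖IccExtend hab φ s‖ ≤ ‖φ‖ := φ.norm_coe_le_norm _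
  have hψs : ‖IccExtend hab ψ s‖ ≤ ‖ψ‖ := ψ.norm_coe_le_norm _
  calc _ ≤ C₁ * ((2 * ‖IccExtend hab φ s‖ + ‖IccExtend hab ψ s‖) ^ 2 / C₂ ^ 3 + 1 / C₂ ^ 2)
        * ‖IccExtend hab ψ s‖ ^ 2 := abs_div_add_norm_sq_sub_add_inner_le hC₁ hC₂ _ _
    _ ≤ C₁ * ((2 * ‖φ‖ + 1) ^ 2 / C₂ ^ 3 + 1 / C₂ ^ 2) * ‖ψ‖ ^ 2 := by
        gcongr
        linarith

theorem hasFDerivAt_integral_div_add_norm_sq_IccExtend {C₁ C₂ : ℝ} (hC₁ : 0 ≤ C₁)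
    (hC₂ : 0 < C₂) (C₃ c d : ℝ) (φ : C(Icc a b, H)) :
    ∃ L : C(Icc a b, H) →L[ℝ] ℝ,
      HasFDerivAt (fun χ : C(Icc a b, H) => ∫ s in c..d, (C₁ / (C₂ + ‖IccExtend hab χ s‖ ^ 2) + C₃))
        L φ ∧
      ∀ ψ, L ψ = -∫ s in c..d, 2 * C₁ * ⟪IccExtend hab φ s, IccExtend hab ψ s⟫ /
        (C₂ + ‖IccExtend hab φ s‖ ^ 2) ^ 2 := by
  have hφ : Continuous (IccExtend hab φ) := φ.continuous.Icc_extend'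
  set w : ℝ → H := fun s =>
    (2 * C₁ / (C₂ + ‖IccExtend hab φ s‖ ^ 2) ^ 2) • IccExtend hab φ s
  have hw : Continuous w :=
    (continuous_const.div ((continuous_const.add (hφ.norm.pow 2)).pow 2)
      fun s => (pow_pos (add_pos_of_pos_of_nonneg hC₂ (sq_nonneg _)) 2).ne').smul hφ
  have hw_inner : ∀ (ψ : C(Icc a b, H)) s, ⟪w s, IccExtend hab ψ s⟫ =
      2 * C₁ * ⟪IccExtend hab φ s, IccExtend hab ψ s⟫ / (C₂ + ‖IccExtend hab φ s‖ ^ 2) ^ 2 :=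
    fun ψ s => by rw [real_inner_smul_left]; ring
  refine ⟨-innerIntegralCLM hab hw c d, ?_, fun ψ => by
    simp only [neg_apply, innerIntegralCLM_apply, hw_inner]⟩
  set F : C(Icc a b, H) → ℝ → ℝ := fun χ s => C₁ / (C₂ + ‖IccExtend hab χ s‖ ^ 2) + C₃
  have hF : ∀ χ, Continuous (F χ) :=
    (continuous_uncurry_div_add_norm_sq_IccExtend hab hC₂ C₁ C₃).uncurry_left
  set M := C₁ * ((2 * ‖φ‖ + 1) ^ 2 / C₂ ^ 3 + 1 / C₂ ^ 2)
  rw [hasFDerivAt_iff_isLittleO_nhds_zero]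
  refine IsBigO.trans_isLittleO (IsBigO.of_bound (M * |d - c|) ?_)
    (isLittleO_norm_pow_id one_lt_two)
  filter_upwards [Metric.closedBall_mem_nhds (0 : C(Icc a b, H)) one_pos] with ψ hψ
  rw [mem_closedBall_zero_iff] at hψ
  have hrem : ∀ s, ‖F (φ + ψ) s - F φ s + ⟪w s, IccExtend hab ψ s⟫‖ ≤ M * ‖ψ‖ ^ 2 := by
    intro s
    rw [Real.norm_eq_abs, hw_inner, add_sub_add_right_eq_sub]
    exact abs_div_add_norm_sq_IccExtend_sub_add_inner_le hab hC₁ hC₂ hψ s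
  calc ‖(∫ s in c..d, F (φ + ψ) s) - (∫ s in c..d, F φ s) - (-innerIntegralCLM hab hw c d) ψ‖
      = ‖∫ s in c..d, (F (φ + ψ) s - F φ s + ⟪w s, IccExtend hab ψ s⟫)‖ := by
        rw [neg_apply, innerIntegralCLM_apply, sub_neg_eq_add,
          ← intervalIntegral.integral_sub ((hF _).intervalIntegrable _ _)
            ((hF _).intervalIntegrable _ _),
          ← intervalIntegral.integral_add (f := fun s => F (φ + ψ) s - F φ s)
            (((hF _).sub (hF _)).intervalIntegrable _ _)
            ((hw.inner (ψ.continuous.Icc_extend' (h := hab))).intervalIntegrable _ _)]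
    _ ≤ M * ‖ψ‖ ^ 2 * |d - c| := norm_integral_le_of_norm_le_const fun s _ => hrem s
    _ = M * |d - c| * ‖‖ψ‖ ^ 2‖ := by rw [norm_pow, norm_norm]; ring

end IntervalFunctions

theorem mul_abs_sub_le_abs_Rthr_sub {H : Type*} [NormedAddCommGroup H] {h C₁ C₂ C₃ : ℝ}
    (hC₁ : 0 ≤ C₁) (hC₂ : 0 < C₂) (hh0 : -h ≤ 0) (χ : C(Icc (-h) (0 : ℝ), H)) (ρ ρ' : ℝ) :
    C₃ * |ρ - ρ'| ≤ |Rthr h C₁ C₂ C₃ hh0 χ ρ - Rthr h C₁ C₂ C₃ hh0 χ ρ'| := by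
  have hG := (continuous_uncurry_div_add_norm_sq_IccExtend hh0 hC₂ C₁ C₃).uncurry_left χ
  rw [Rthr, Rthr, ← integral_add_adjacent_intervals (hG.intervalIntegrable (-ρ) (-ρ'))
    (hG.intervalIntegrable _ 0), add_sub_cancel_right, ← neg_sub_neg ρ' ρ]
  exact mul_abs_sub_le_abs_intervalIntegral hG (fun s => le_add_of_nonneg_left (by positivity)) _ _

/-- Assume `C₃ h > 1` and let `r : C([-h,0];H) → [0,h]` assign to each `φ`
the unique `ρ ∈ [0,h]` with `R(ρ;φ) = 1`.  Then `r` is Fréchet differentiable at every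
`φ`, with derivative the continuous linear functional
`Dr(φ)ψ = (C₁/(C₂+‖φ(-r(φ))‖²) + C₃)⁻¹ ∫_{-r(φ)}^{0} 2C₁⟨φ(s),ψ(s)⟩/(C₂+‖φ(s)‖²)² ds`. -/
theorem threshold_delay_frechet_differentiable {H : Type*} [NormedAddCommGroup H]
    [InnerProductSpace ℝ H]
    (h C₁ C₂ C₃ : ℝ) (hh : 0 < h) (hC₁ : 0 < C₁) (hC₂ : 0 < C₂) (hC₃ : 0 < C₃)
    (r : C(Set.Icc (-h) (0 : ℝ), H) → ℝ)
    (hr : ∀ φ, r φ ∈ Set.Icc (0 : ℝ) h ∧ Rthr h C₁ C₂ C₃ (by linarith) φ (r φ) = 1) :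
    ∀ φ : C(Set.Icc (-h) (0 : ℝ), H),
      ∃ L : C(Set.Icc (-h) (0 : ℝ), H) →L[ℝ] ℝ, HasFDerivAt r L φ ∧
        ∀ ψ : C(Set.Icc (-h) (0 : ℝ), H),
          L ψ = (C₁ / (C₂ + ‖Set.IccExtend (show -h ≤ (0:ℝ) by linarith) (⇑φ) (-(r φ))‖ ^ 2)
                  + C₃)⁻¹ *
            ∫ s in (-(r φ))..(0 : ℝ),
              (2 * C₁ *
                  (inner ℝ (Set.IccExtend (show -h ≤ (0:ℝ) by linarith) (⇑φ) s)
                         (Set.IccExtend (show -h ≤ (0:ℝ) by linarith) (⇑ψ) s) : ℝ)) /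
                (C₂ + ‖Set.IccExtend (show -h ≤ (0:ℝ) by linarith) (⇑φ) s‖ ^ 2) ^ 2 := by
  intro φ
  have hh0 : -h ≤ (0 : ℝ) := by linarith
  have hG := continuous_uncurry_div_add_norm_sq_IccExtend (H := H) hh0 hC₂ C₁ C₃
  obtain ⟨L, hL, hL_apply⟩ :=
    hasFDerivAt_integral_div_add_norm_sq_IccExtend hh0 hC₁.le hC₂ C₃ (-(r φ)) 0 φ
  have hlevel : ∀ χ, Rthr h C₁ C₂ C₃ hh0 χ (r χ) = Rthr h C₁ C₂ C₃ hh0 φ (r φ) :=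
    fun χ => (hr χ).2.trans (hr φ).2.symm
  refine ⟨_, hasFDerivAt_implicit_of_uniformly_expanding (Φ := Rthr h C₁ C₂ C₃ hh0) hC₃
    (hasFDerivAt_integral_neg_snd hG hL) ?_ hlevel (mul_abs_sub_le_abs_Rthr_sub hC₁.le hC₂ hh0),
    fun ψ => ?_⟩
  · simp only [add_apply, smul_apply, ContinuousLinearMap.coe_snd', smul_eq_mul, mul_one,
      ContinuousLinearMap.comp_apply, ContinuousLinearMap.coe_fst', map_zero, add_zero, ne_eq]
    positivity
  · simp only [add_apply, smul_apply, ContinuousLinearMap.coe_snd', smul_eq_mul, mul_one,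
      ContinuousLinearMap.comp_apply, ContinuousLinearMap.coe_fst', map_zero, add_zero,
      ContinuousLinearMap.add_comp, ContinuousLinearMap.smul_comp, ContinuousLinearMap.snd_comp_inl,
      smul_zero, zero_add, ContinuousLinearMap.inl_apply, neg_mul]
    rw [hL_apply]
    ring
end

section
/- Let ψ : [−h,0] → E be continuously differentiable. For every ε > 0 there exist T > 0 and r > 0 such that for every continuously differentiable φ : [−h,0] → E with sup_{θ∈[−h,0]} ‖φ(θ) − ψ(θ)‖ + sup_{θ∈[−h,0]} ‖φ'(θ) − ψ'(θ)‖ < r, and for every t ∈ [0,T], one has sup_{θ∈[−h,0]} ‖(E_T φ)(t+θ) − ψ(θ)‖ + sup_{θ∈[−h,0]} ‖D(E_T φ)(t+θ) − ψ'(θ)‖ < ε, where D(E_T φ)(s) = φ'(s) for s ∈ [−h,0] and D(E_T φ)(s) = φ'(0) for s ∈ [0,T] is the derivative of E_T φ. -/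
/-- The extension `E_T φ` of a `C¹` function `φ : [-h,0] → E` with derivative `dφ`:
`(E_T φ)(t) = φ(t)` for `t < 0` and `(E_T φ)(t) = φ(0) + t φ'(0)` for `t ≥ 0`. -/
noncomputable def extT {E : Type*} [NormedAddCommGroup E] [NormedSpace ℝ E]
    (φ dφ : ℝ → E) : ℝ → E :=
  fun t => if t < 0 then φ t else φ 0 + t • dφ 0

/-- The derivative of the extension `E_T φ`: `D(E_T φ)(s) = φ'(s)` for `s ∈ [-h,0]` and
`D(E_T φ)(s) = φ'(0)` for `s ∈ [0,T]`. -/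
noncomputable def extD {E : Type*} [NormedAddCommGroup E] [NormedSpace ℝ E]
    (dφ : ℝ → E) : ℝ → E :=
  fun s => if s < 0 then dφ s else dφ 0

/-- Let `ψ : [-h,0] → E` be `C¹`.  For every `ε > 0` there are `T > 0`
and `r > 0` such that for every `C¹` function `φ : [-h,0] → E` with
`sup ‖φ - ψ‖ + sup ‖φ' - ψ'‖ < r` and every `t ∈ [0,T]`,
`sup_θ ‖(E_T φ)(t+θ) - ψ(θ)‖ + sup_θ ‖D(E_T φ)(t+θ) - ψ'(θ)‖ < ε`. -/
theorem extension_segments_close {E : Type*} [NormedAddCommGroup E] [NormedSpace ℝ E]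
    [CompleteSpace E] (h : ℝ) (hh : 0 < h) (ψ dψ : ℝ → E)
    (hψ : ∀ θ ∈ Set.Icc (-h) (0 : ℝ), HasDerivWithinAt ψ (dψ θ) (Set.Icc (-h) 0) θ)
    (hdψ : ContinuousOn dψ (Set.Icc (-h) 0)) :
    ∀ ε > (0 : ℝ), ∃ T > (0 : ℝ), ∃ r > (0 : ℝ), ∀ φ dφ : ℝ → E,
      (∀ θ ∈ Set.Icc (-h) (0 : ℝ), HasDerivWithinAt φ (dφ θ) (Set.Icc (-h) 0) θ) →
      ContinuousOn dφ (Set.Icc (-h) 0) →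
      (⨆ θ : Set.Icc (-h) (0 : ℝ), ‖φ (θ : ℝ) - ψ (θ : ℝ)‖)
        + (⨆ θ : Set.Icc (-h) (0 : ℝ), ‖dφ (θ : ℝ) - dψ (θ : ℝ)‖) < r →
      ∀ t ∈ Set.Icc (0 : ℝ) T,
        (⨆ θ : Set.Icc (-h) (0 : ℝ), ‖extT φ dφ (t + (θ : ℝ)) - ψ (θ : ℝ)‖)
          + (⨆ θ : Set.Icc (-h) (0 : ℝ), ‖extD dφ (t + (θ : ℝ)) - dψ (θ : ℝ)‖) < ε := by
  intro ε hε
  have hψc : ContinuousOn ψ (Set.Icc (-h) 0) := fun θ hθ => (hψ θ hθ).continuousWithinAt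
  obtain ⟨δ1, hδ1, H1⟩ := Metric.uniformContinuousOn_iff.mp
    (isCompact_Icc.uniformContinuousOn_of_continuous hψc) (ε/8) (by positivity)
  obtain ⟨δ2, hδ2, H2⟩ := Metric.uniformContinuousOn_iff.mp
    (isCompact_Icc.uniformContinuousOn_of_continuous hdψ) (ε/8) (by positivity)
  set δ := min δ1 δ2 with hδdef
  have hδ : 0 < δ := lt_min hδ1 hδ2
  set c := ‖dψ 0‖ + 1 with hcdef
  have hc : 0 < c := by positivity
  refine ⟨min (δ/2) (ε/(8*c)), lt_min (by positivity) (by positivity),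
    min 1 (ε/8), lt_min one_pos (by positivity), ?_⟩
  set T := min (δ/2) (ε/(8*c)) with hTdef
  set r := min 1 (ε/8) with hrdef
  intro φ dφ hφ hdφc hclose t ht
  have hφc : ContinuousOn φ (Set.Icc (-h) 0) := fun θ hθ => (hφ θ hθ).continuousWithinAt
  have h0mem : (0:ℝ) ∈ Set.Icc (-h) (0:ℝ) := ⟨by linarith, le_refl 0⟩
  have hb1 : BddAbove (Set.range fun θ : Set.Icc (-h) (0:ℝ) => ‖φ (θ:ℝ) - ψ (θ:ℝ)‖) := by
    have hcont : Continuous fun θ : Set.Icc (-h) (0:ℝ) => ‖φ (θ:ℝ) - ψ (θ:ℝ)‖ :=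
      (hφc.restrict.sub hψc.restrict).norm
    exact (isCompact_range hcont).bddAbove
  have hb2 : BddAbove (Set.range fun θ : Set.Icc (-h) (0:ℝ) => ‖dφ (θ:ℝ) - dψ (θ:ℝ)‖) := by
    have hcont : Continuous fun θ : Set.Icc (-h) (0:ℝ) => ‖dφ (θ:ℝ) - dψ (θ:ℝ)‖ :=
      (hdφc.restrict.sub hdψ.restrict).norm
    exact (isCompact_range hcont).bddAbove
  have hn1 : 0 ≤ ⨆ θ : Set.Icc (-h) (0:ℝ), ‖φ (θ:ℝ) - ψ (θ:ℝ)‖ :=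
    Real.iSup_nonneg fun _ => norm_nonneg _
  have hn2 : 0 ≤ ⨆ θ : Set.Icc (-h) (0:ℝ), ‖dφ (θ:ℝ) - dψ (θ:ℝ)‖ :=
    Real.iSup_nonneg fun _ => norm_nonneg _
  have hr1 : ∀ θ ∈ Set.Icc (-h) (0:ℝ), ‖φ θ - ψ θ‖ < r := by
    intro θ hθ
    have h1 := le_ciSup hb1 (⟨θ, hθ⟩ : Set.Icc (-h) (0:ℝ))
    simp only at h1
    linarith
  have hr2 : ∀ θ ∈ Set.Icc (-h) (0:ℝ), ‖dφ θ - dψ θ‖ < r := by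
    intro θ hθ
    have h1 := le_ciSup hb2 (⟨θ, hθ⟩ : Set.Icc (-h) (0:ℝ))
    simp only at h1
    linarith
  have ht0 : 0 ≤ t := ht.1
  have htT : t ≤ T := ht.2
  have hTδ : T ≤ δ/2 := min_le_left _ _
  have hTε : T ≤ ε/(8*c) := min_le_right _ _
  have hTεc : T * c ≤ ε/8 := by
    rw [← div_div] at hTε
    exact (le_div_iff₀ hc).mp hTε
  have hr_le : r ≤ ε/8 := min_le_right _ _
  have hr_le1 : r ≤ 1 := min_le_left _ _
  have htδ1 : t < δ1 := by
    have : δ ≤ δ1 := min_le_left _ _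
    linarith
  have htδ2 : t < δ2 := by
    have : δ ≤ δ2 := min_le_right _ _
    linarith
  have hdφ0 : ‖dφ 0‖ ≤ c := by
    have h1 := hr2 0 h0mem
    have h2 : ‖dφ 0‖ - ‖dψ 0‖ ≤ ‖dφ 0 - dψ 0‖ := norm_sub_norm_le _ _
    rw [hcdef]; linarith
  have S1 : (⨆ θ : Set.Icc (-h) (0:ℝ), ‖extT φ dφ (t + (θ:ℝ)) - ψ (θ:ℝ)‖)
      ≤ ε/8 + ε/8 + ε/8 := by
    refine Real.iSup_le ?_ (by positivity)
    rintro ⟨θ, hθ⟩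
    simp only [extT]
    by_cases hcase : t + θ < 0
    · rw [if_pos hcase]
      have hmem : t + θ ∈ Set.Icc (-h) (0:ℝ) := ⟨by linarith [hθ.1], le_of_lt hcase⟩
      have hdist : dist (t+θ) θ < δ1 := by
        rw [Real.dist_eq, add_sub_cancel_right, abs_of_nonneg ht0]; linarith
      have hψd : dist (ψ (t+θ)) (ψ θ) < ε/8 := H1 _ hmem _ hθ hdist
      rw [dist_eq_norm] at hψd
      have htri : ‖φ (t+θ) - ψ θ‖ ≤ ‖φ (t+θ) - ψ (t+θ)‖ + ‖ψ (t+θ) - ψ θ‖ :=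
        norm_sub_le_norm_sub_add_norm_sub _ _ _
      have := hr1 (t+θ) hmem
      linarith
    · rw [if_neg hcase]
      push_neg at hcase
      have hθt : -θ ≤ t := by linarith
      have hdist : dist (0:ℝ) θ < δ1 := by
        rw [Real.dist_eq, zero_sub, abs_neg, abs_of_nonpos hθ.2]; linarith
      have hψd : dist (ψ 0) (ψ θ) < ε/8 := H1 _ h0mem _ hθ hdist
      rw [dist_eq_norm] at hψd
      have hre : φ 0 + (t+θ) • dφ 0 - ψ θ = (φ 0 - ψ θ) + (t+θ) • dφ 0 := by abel
      have hθ2 : θ ≤ 0 := hθ.2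
      have hsm : ‖(t+θ) • dφ 0‖ ≤ ε/8 := by
        rw [norm_smul, Real.norm_eq_abs, abs_of_nonneg hcase]
        have h1 : (t+θ) * ‖dφ 0‖ ≤ T * c := by
          apply mul_le_mul (by linarith) hdφ0 (norm_nonneg _) (by linarith)
        exact le_trans h1 hTεc
      calc ‖φ 0 + (t+θ) • dφ 0 - ψ θ‖ ≤ ‖φ 0 - ψ θ‖ + ‖(t+θ) • dφ 0‖ := by
            rw [hre]; exact norm_add_le _ _
        _ ≤ (‖φ 0 - ψ 0‖ + ‖ψ 0 - ψ θ‖) + ‖(t+θ) • dφ 0‖ := by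
            have := norm_sub_le_norm_sub_add_norm_sub (φ 0) (ψ 0) (ψ θ)
            linarith
        _ ≤ ε/8 + ε/8 + ε/8 := by
            have := hr1 0 h0mem
            linarith
  have S2 : (⨆ θ : Set.Icc (-h) (0:ℝ), ‖extD dφ (t + (θ:ℝ)) - dψ (θ:ℝ)‖)
      ≤ ε/8 + ε/8 := by
    refine Real.iSup_le ?_ (by positivity)
    rintro ⟨θ, hθ⟩
    simp only [extD]
    by_cases hcase : t + θ < 0
    · rw [if_pos hcase]
      have hmem : t + θ ∈ Set.Icc (-h) (0:ℝ) := ⟨by linarith [hθ.1], le_of_lt hcase⟩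
      have hdist : dist (t+θ) θ < δ2 := by
        rw [Real.dist_eq, add_sub_cancel_right, abs_of_nonneg ht0]; linarith
      have hψd : dist (dψ (t+θ)) (dψ θ) < ε/8 := H2 _ hmem _ hθ hdist
      rw [dist_eq_norm] at hψd
      have htri : ‖dφ (t+θ) - dψ θ‖ ≤ ‖dφ (t+θ) - dψ (t+θ)‖ + ‖dψ (t+θ) - dψ θ‖ :=
        norm_sub_le_norm_sub_add_norm_sub _ _ _
      have := hr2 (t+θ) hmem
      linarith
    · rw [if_neg hcase]
      push_neg at hcase
      have hdist : dist (0:ℝ) θ < δ2 := by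
        rw [Real.dist_eq, zero_sub, abs_neg, abs_of_nonpos hθ.2]; linarith
      have hψd : dist (dψ 0) (dψ θ) < ε/8 := H2 _ h0mem _ hθ hdist
      rw [dist_eq_norm] at hψd
      have htri : ‖dφ 0 - dψ θ‖ ≤ ‖dφ 0 - dψ 0‖ + ‖dψ 0 - dψ θ‖ :=
        norm_sub_le_norm_sub_add_norm_sub _ _ _
      have := hr2 0 h0mem
      linarith
  linarith
end

section
/- Let b > 0, define a : [−h,0] → ℝ by a(s) = s e^{bs}, and let L : C([−h,0];E) → E be a continuous linear map with operator norm ‖L‖ < b. Then the continuous linear map T : E → E defined by T y⁰ = y⁰ − L(θ ↦ a(θ) y⁰) satisfies ‖T y⁰‖ ≥ (1 − 1/e) ‖y⁰‖ ≥ (1/2) ‖y⁰‖ for all y⁰ ∈ E, and T is a linear isomorphism of E (a continuous linear bijection with continuous inverse). -/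
/-- The continuous function `θ ↦ a(θ) y⁰` on `[-h,0]`, where `a(s) = s e^{bs}`. -/
noncomputable def aMap {E : Type*} [NormedAddCommGroup E] [NormedSpace ℝ E]
    (h b : ℝ) (y0 : E) : C(Set.Icc (-h) (0 : ℝ), E) :=
  ⟨fun θ => ((θ : ℝ) * Real.exp (b * (θ : ℝ))) • y0,
    (continuous_subtype_val.mul
      (Real.continuous_exp.comp (continuous_const.mul continuous_subtype_val))).smul
      continuous_const⟩

/-! The map `y⁰ ↦ L(a(·) y⁰)` factors through `y⁰ ↦ a(·) y⁰`, whose norm is at most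
`sup_{s ≤ 0} |s| e^{bs} = 1/(b e)` (attained at `s = -1/b`). Hence it has norm at most
`‖L‖ / (b e) < 1/e < 1`, so `T = 1 - L ∘ a(·)` is invertible by the Neumann series and satisfies
`‖T y⁰‖ ≥ (1 - 1/e) ‖y⁰‖`. -/

open Real

theorem abs_mul_exp_mul_le {b θ : ℝ} (hb : 0 < b) (hθ : θ ≤ 0) :
    |θ * exp (b * θ)| ≤ (b * exp 1)⁻¹ := by
  have hmax := mul_exp_neg_le_exp_neg_one (-(b * θ))
  rw [neg_neg, exp_neg] at hmax
  rw [abs_of_nonpos (mul_nonpos_of_nonpos_of_nonneg hθ (exp_pos _).le), mul_inv]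
  calc -(θ * exp (b * θ)) = b⁻¹ * (-(b * θ) * exp (b * θ)) := by field_simp
    _ ≤ b⁻¹ * (exp 1)⁻¹ := by gcongr

namespace ContinuousMap

variable {X 𝕜 E : Type*} [TopologicalSpace X] [CompactSpace X] [NontriviallyNormedField 𝕜]
  [NormedAddCommGroup E] [NormedSpace 𝕜 E]

noncomputable def smulConstCLM (a : C(X, 𝕜)) : E →L[𝕜] C(X, E) :=
  LinearMap.mkContinuous
    { toFun := fun y => ⟨fun x => a x • y, a.continuous.smul continuous_const⟩
      map_add' := fun y z => by ext x; exact smul_add _ _ _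
      map_smul' := fun c y => by ext x; exact smul_comm _ _ _ }
    ‖a‖ fun y => (norm_le _ (by positivity)).2 fun x => by
      simpa [norm_smul] using mul_le_mul_of_nonneg_right (a.norm_coe_le_norm x) (norm_nonneg y)

theorem norm_smulConstCLM_le (a : C(X, 𝕜)) : ‖(smulConstCLM a : E →L[𝕜] C(X, E))‖ ≤ ‖a‖ :=
  LinearMap.mkContinuous_norm_le _ (norm_nonneg _) _

end ContinuousMap

section OneSub

variable {𝕜 E : Type*} [NontriviallyNormedField 𝕜] [NormedAddCommGroup E] [NormedSpace 𝕜 E]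

theorem ContinuousLinearMap.mul_norm_le_norm_sub_apply {A : E →L[𝕜] E} {c : ℝ} (hA : ‖A‖ ≤ c)
    (y : E) : (1 - c) * ‖y‖ ≤ ‖y - A y‖ := by
  have hAy : ‖A y‖ ≤ c * ‖y‖ := (A.le_opNorm y).trans (by gcongr)
  linarith [norm_sub_norm_le y (A y)]

noncomputable def ContinuousLinearEquiv.oneSub [CompleteSpace E] (A : E →L[𝕜] E) (hA : ‖A‖ < 1) :
    E ≃L[𝕜] E :=
  ContinuousLinearEquiv.unitsEquiv 𝕜 E (Units.oneSub A hA)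

@[simp]
theorem ContinuousLinearEquiv.oneSub_apply [CompleteSpace E] (A : E →L[𝕜] E) (hA : ‖A‖ < 1)
    (y : E) : ContinuousLinearEquiv.oneSub A hA y = y - A y :=
  rfl

end OneSub

theorem T_isomorphism_general {E : Type*} [NormedAddCommGroup E] [NormedSpace ℝ E]
    [CompleteSpace E] (h b : ℝ) (hb : 0 < b)
    (L : C(Set.Icc (-h) (0 : ℝ), E) →L[ℝ] E) (hL : ‖L‖ < b) :
    (∀ y0 : E,
      (1 - (Real.exp 1)⁻¹) * ‖y0‖ ≤ ‖y0 - L (aMap h b y0)‖ ∧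
      (1 / 2 : ℝ) * ‖y0‖ ≤ (1 - (Real.exp 1)⁻¹) * ‖y0‖) ∧
    ∃ T : E ≃L[ℝ] E, ∀ y0 : E, T y0 = y0 - L (aMap h b y0) := by
  let a : C(Set.Icc (-h) (0 : ℝ), ℝ) := ⟨fun θ => θ * exp (b * θ), by fun_prop⟩
  let A : E →L[ℝ] E := L.comp (ContinuousMap.smulConstCLM a)
  have hA_apply (y0 : E) : A y0 = L (aMap h b y0) := rfl
  have ha : ‖a‖ ≤ (b * exp 1)⁻¹ :=
    (ContinuousMap.norm_le _ (by positivity)).2 fun θ => abs_mul_exp_mul_le hb θ.2.2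
  have hA : ‖A‖ ≤ (exp 1)⁻¹ :=
    calc ‖A‖ ≤ ‖L‖ * ‖a‖ :=
          (L.opNorm_comp_le _).trans (by gcongr; exact ContinuousMap.norm_smulConstCLM_le a)
      _ ≤ b * (b * exp 1)⁻¹ := mul_le_mul hL.le ha (norm_nonneg _) hb.le
      _ = (exp 1)⁻¹ := by field_simp
  have hinv_exp : (exp 1)⁻¹ < 1 / 2 := by simpa [exp_neg] using exp_neg_one_lt_half
  refine ⟨fun y0 => ⟨?_, by gcongr; linarith⟩,
    ContinuousLinearEquiv.oneSub A (hA.trans_lt (by linarith)), fun y0 => ?_⟩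
  · simpa only [hA_apply] using A.mul_norm_le_norm_sub_apply hA y0
  · simp only [ContinuousLinearEquiv.oneSub_apply, hA_apply]

/-- Let `L : C([-h,0];E) → E` be continuous linear with `‖L‖ < b`, and
`T y⁰ = y⁰ - L(a(·) y⁰)` with `a(s) = s e^{bs}`.  Then
`‖T y⁰‖ ≥ (1 - 1/e) ‖y⁰‖ ≥ (1/2) ‖y⁰‖` for all `y⁰`, and `T` is a linear isomorphism
of `E` (a continuous linear bijection with continuous inverse). -/
theorem T_isomorphism {E : Type*} [NormedAddCommGroup E] [NormedSpace ℝ E]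
    [CompleteSpace E] (h b : ℝ) (hh : 0 < h) (hb : 0 < b)
    (L : C(Set.Icc (-h) (0 : ℝ), E) →L[ℝ] E) (hL : ‖L‖ < b) :
    (∀ y0 : E,
      (1 - (Real.exp 1)⁻¹) * ‖y0‖ ≤ ‖y0 - L (aMap h b y0)‖ ∧
      (1 / 2 : ℝ) * ‖y0‖ ≤ (1 - (Real.exp 1)⁻¹) * ‖y0‖) ∧
    ∃ T : E ≃L[ℝ] E, ∀ y0 : E, T y0 = y0 - L (aMap h b y0) :=
  T_isomorphism_general h b hb L hL
end
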